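/- Let m ≥ 3 be an odd integer. For every integer r, the element g_r := [e_mʳ·j, iʳ·j·e₄] belongs to G₁(m) and satisfies g_r ∘ g_r = id (it is an involution different from the identity). Moreover, all these elements lie in a single conjugacy class of G₁(m): for all integers r and s there exists h ∈ G₁(m) with h·g_r·h⁻¹ = g_s. -/

import Mathlib

noncomputable section

open Quaternion Real

/-- The quaternion `i`. -/
def qi : Quaternion ℝ := ⟨0, 1, 0, 0⟩
/-- The quaternion `j`. -/
def qj : Quaternion ℝ := ⟨0, 0, 1, 0⟩
/-- The quaternion `k`. -/
def qk : Quaternion ℝ := ⟨0, 0, 0, 1⟩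
/-- The unit quaternion `e_s = cos(π/s) + sin(π/s) i`. -/
def es (s : ℕ) : Quaternion ℝ := ⟨Real.cos (Real.pi / s), Real.sin (Real.pi / s), 0, 0⟩

lemma norm_eq_one_of_normSq {a : Quaternion ℝ} (h : Quaternion.normSq a = 1) : ‖a‖ = 1 := by
  have h2 : ‖a‖ * ‖a‖ = 1 := by rw [← Quaternion.normSq_eq_norm_mul_self, h]
  rcases mul_self_eq_one_iff.1 h2 with h' | h'
  · exact h'
  · nlinarith [norm_nonneg a]

lemma norm_qi : ‖qi‖ = 1 := norm_eq_one_of_normSq (by rw [Quaternion.normSq_def']; simp [qi])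
lemma norm_qj : ‖qj‖ = 1 := norm_eq_one_of_normSq (by rw [Quaternion.normSq_def']; simp [qj])
lemma norm_qk : ‖qk‖ = 1 := norm_eq_one_of_normSq (by rw [Quaternion.normSq_def']; simp [qk])
lemma norm_es (s : ℕ) : ‖es s‖ = 1 :=
  norm_eq_one_of_normSq (by
    rw [Quaternion.normSq_def']
    simp [es, Real.sin_sq_add_cos_sq, Real.cos_sq_add_sin_sq])

lemma self_mul_star_of_norm_one {a : Quaternion ℝ} (h : ‖a‖ = 1) : a * star a = 1 := by
  rw [Quaternion.self_mul_star]
  have h1 : Quaternion.normSq a = 1 := by rw [Quaternion.normSq_eq_norm_mul_self, h, mul_one]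
  rw [h1]; norm_num

lemma star_mul_self_of_norm_one {a : Quaternion ℝ} (h : ‖a‖ = 1) : star a * a = 1 := by
  rw [Quaternion.star_mul_self]
  have h1 : Quaternion.normSq a = 1 := by rw [Quaternion.normSq_eq_norm_mul_self, h, mul_one]
  rw [h1]; norm_num

/-- The rotation `[l,r] : x ↦ l̄ x r` of `ℝ⁴ ≅ ℍ`, for unit quaternions `l, r`. -/
def qrot (l r : Quaternion ℝ) (hl : ‖l‖ = 1) (hr : ‖r‖ = 1) :
    Quaternion ℝ ≃ₗ[ℝ] Quaternion ℝ where
  toFun x := star l * x * r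
  invFun x := l * x * star r
  map_add' x y := by noncomm_ring
  map_smul' c x := by simp [mul_smul_comm, smul_mul_assoc]
  left_inv x := by
    have h : l * (star l * x * r) * star r = (l * star l) * x * (r * star r) := by noncomm_ring
    simp [h, self_mul_star_of_norm_one hl, self_mul_star_of_norm_one hr]
  right_inv x := by
    have h : star l * (l * x * star r) * r = (star l * l) * x * (star r * r) := by noncomm_ring
    simp [h, star_mul_self_of_norm_one hl, star_mul_self_of_norm_one hr]

/-- The group `G₁(m)`. -/
def G1 (m : ℕ) : Subgroup (Quaternion ℝ ≃ₗ[ℝ] Quaternion ℝ) :=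
  Subgroup.closure
    {qrot (es m) 1 (norm_es m) norm_one,
     qrot 1 qi norm_one norm_qi,
     qrot 1 qj norm_one norm_qj,
     qrot qj (es 4) norm_qj (norm_es 4)}

/-- The group `G₂(m)`. -/
def G2 (m : ℕ) : Subgroup (Quaternion ℝ ≃ₗ[ℝ] Quaternion ℝ) :=
  Subgroup.closure
    {qrot (es m) 1 (norm_es m) norm_one,
     qrot 1 qi norm_one norm_qi,
     qrot (es (2 * m)) qj (norm_es (2 * m)) norm_qj,
     qrot qj (es 4) norm_qj (norm_es 4)}

/-- The group `G₃(m)`. -/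
def G3 (m : ℕ) : Subgroup (Quaternion ℝ ≃ₗ[ℝ] Quaternion ℝ) :=
  Subgroup.closure
    {qrot (es m) 1 (norm_es m) norm_one,
     qrot 1 qi norm_one norm_qi,
     qrot qj 1 norm_qj norm_one,
     qrot 1 qj norm_one norm_qj}

/-- The group `F₁(m)`. -/
def F1 (m : ℕ) : Subgroup (Quaternion ℝ ≃ₗ[ℝ] Quaternion ℝ) :=
  Subgroup.closure
    {qrot (es m) qi (norm_es m) norm_qi,
     qrot 1 qj norm_one norm_qj}

lemma norm_gl (m : ℕ) (r : ℤ) : ‖es m ^ r * qj‖ = 1 := by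
  rw [norm_mul, norm_zpow, norm_es, norm_qj, one_zpow, one_mul]

lemma norm_gr (r : ℤ) : ‖qi ^ r * qj * es 4‖ = 1 := by
  rw [norm_mul, norm_mul, norm_zpow, norm_qi, norm_qj, norm_es, one_zpow, one_mul, one_mul]

/-- The element `g_r = [e_mʳ · j, iʳ · j · e₄]`. -/
def grot (m : ℕ) (r : ℤ) : Quaternion ℝ ≃ₗ[ℝ] Quaternion ℝ :=
  qrot (es m ^ r * qj) (qi ^ r * qj * es 4) (norm_gl m r) (norm_gr r)

/-!
Write `expI θ = cos θ + sin θ · i`, so that `e_s = expI (π / s)` and `i = expI (π / 2)`. Because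
`j · expI θ = expI (-θ) · j`, products of quaternions of the forms `expI θ` and `expI θ · j` reduce
to arithmetic on angles, and `g_r = [expI (rπ/m) j, expI (rπ/2 - π/4) j]`. Since
`(expI θ · j)² = -1`, `g_r² = [-1, -1] = 1`. Conjugating `[expI c · j, expI d · j]` by
`[expI a, expI b]` gives `[expI (c - 2a) · j, expI (d - 2b) · j]`, which turns `g_{s+2k}` into `g_s`;
conjugating by `[expI a, expI b · j]` gives `[expI (c - 2a) · j, expI (2b - d) · j]`, and as
`e_m ^ m = -1` for odd `m` this turns `g_{s+2k+1}` into `[-e_m^s j, -i^s j e₄] = g_s`.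
-/

lemma qrot_apply (l r : Quaternion ℝ) (hl : ‖l‖ = 1) (hr : ‖r‖ = 1) (x : Quaternion ℝ) :
    qrot l r hl hr x = star l * x * r := rfl

lemma qrot_congr {l r l' r' : Quaternion ℝ} (h₁ : l = l') (h₂ : r = r') (hl : ‖l‖ = 1)
    (hr : ‖r‖ = 1) (hl' : ‖l'‖ = 1) (hr' : ‖r'‖ = 1) : qrot l r hl hr = qrot l' r' hl' hr' := by
  subst h₁ h₂; rfl

lemma qrot_mul (l₁ r₁ l₂ r₂ : Quaternion ℝ) (hl₁ : ‖l₁‖ = 1) (hr₁ : ‖r₁‖ = 1) (hl₂ : ‖l₂‖ = 1)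
    (hr₂ : ‖r₂‖ = 1) :
    qrot l₁ r₁ hl₁ hr₁ * qrot l₂ r₂ hl₂ hr₂ =
      qrot (l₂ * l₁) (r₂ * r₁) (by rw [norm_mul, hl₂, hl₁, one_mul])
        (by rw [norm_mul, hr₂, hr₁, one_mul]) := by
  refine LinearEquiv.ext fun x => ?_
  simp only [LinearEquiv.mul_apply, qrot_apply, star_mul]
  noncomm_ring

lemma qrot_one_one : qrot 1 1 norm_one norm_one = 1 :=
  LinearEquiv.ext fun x => by simp [qrot_apply]

lemma qrot_neg_neg (l r : Quaternion ℝ) (hl : ‖l‖ = 1) (hr : ‖r‖ = 1) :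
    qrot (-l) (-r) (by rwa [norm_neg]) (by rwa [norm_neg]) = qrot l r hl hr :=
  LinearEquiv.ext fun x => by simp [qrot_apply]

lemma qrot_inv (l r : Quaternion ℝ) (hl : ‖l‖ = 1) (hr : ‖r‖ = 1) :
    (qrot l r hl hr)⁻¹ =
      qrot l⁻¹ r⁻¹ (by rw [norm_inv, hl, inv_one]) (by rw [norm_inv, hr, inv_one]) := by
  have hl₀ : l ≠ 0 := by rintro rfl; simp at hl
  have hr₀ : r ≠ 0 := by rintro rfl; simp at hr
  refine inv_eq_of_mul_eq_one_right ?_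
  rw [qrot_mul, ← qrot_one_one]
  exact qrot_congr (inv_mul_cancel₀ hl₀) (inv_mul_cancel₀ hr₀) _ _ _ _

lemma qrot_zpow (l r : Quaternion ℝ) (hl : ‖l‖ = 1) (hr : ‖r‖ = 1) (n : ℤ) :
    qrot l r hl hr ^ n =
      qrot (l ^ n) (r ^ n) (by rw [norm_zpow, hl, one_zpow]) (by rw [norm_zpow, hr, one_zpow]) := by
  have hl₀ : l ≠ 0 := by rintro rfl; simp at hl
  have hr₀ : r ≠ 0 := by rintro rfl; simp at hr
  induction n using Int.induction_on with
  | zero => simp only [zpow_zero]; exact qrot_one_one.symm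
  | succ n ih =>
    rw [zpow_add_one, ih, qrot_mul]
    exact qrot_congr (by rw [add_comm, zpow_one_add₀ hl₀]) (by rw [add_comm, zpow_one_add₀ hr₀])
      _ _ _ _
  | pred n ih =>
    rw [zpow_sub_one, ih, qrot_inv, qrot_mul]
    exact qrot_congr (by rw [sub_eq_neg_add, zpow_add₀ hl₀, zpow_neg_one])
      (by rw [sub_eq_neg_add, zpow_add₀ hr₀, zpow_neg_one]) _ _ _ _

lemma qrot_mul_qrot_mul_inv {l r L R L' R' : Quaternion ℝ} (hl : ‖l‖ = 1) (hr : ‖r‖ = 1)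
    (hL : ‖L‖ = 1) (hR : ‖R‖ = 1) (hL' : ‖L'‖ = 1) (hR' : ‖R'‖ = 1)
    (hLl : L * l = l * L') (hRr : R * r = r * R') :
    qrot l r hl hr * qrot L R hL hR * (qrot l r hl hr)⁻¹ = qrot L' R' hL' hR' := by
  rw [mul_inv_eq_iff_eq_mul, qrot_mul, qrot_mul]
  exact qrot_congr hLl hRr _ _ _ _

def expI (θ : ℝ) : Quaternion ℝ := ⟨cos θ, sin θ, 0, 0⟩

@[simp] lemma expI_re (θ : ℝ) : (expI θ).re = cos θ := rfl
@[simp] lemma expI_imI (θ : ℝ) : (expI θ).imI = sin θ := rfl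
@[simp] lemma expI_imJ (θ : ℝ) : (expI θ).imJ = 0 := rfl
@[simp] lemma expI_imK (θ : ℝ) : (expI θ).imK = 0 := rfl

@[simp] lemma qj_re : qj.re = 0 := rfl
@[simp] lemma qj_imI : qj.imI = 0 := rfl
@[simp] lemma qj_imJ : qj.imJ = 1 := rfl
@[simp] lemma qj_imK : qj.imK = 0 := rfl

lemma norm_expI (θ : ℝ) : ‖expI θ‖ = 1 :=
  norm_eq_one_of_normSq (by rw [Quaternion.normSq_def']; simp)

lemma norm_expI_mul_qj (θ : ℝ) : ‖expI θ * qj‖ = 1 := by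
  rw [norm_mul, norm_expI, norm_qj, one_mul]

lemma expI_zero : expI 0 = 1 := by
  ext <;> simp

lemma expI_add (a b : ℝ) : expI (a + b) = expI a * expI b := by
  ext <;> simp [cos_add, sin_add, Quaternion.re_mul, Quaternion.imI_mul, Quaternion.imJ_mul,
    Quaternion.imK_mul]
  all_goals ring

lemma expI_add_pi (a : ℝ) : expI (a + π) = -expI a := by
  ext <;> simp

lemma expI_zpow (a : ℝ) (n : ℤ) : expI a ^ n = expI (n * a) := by
  have h₀ : expI a ≠ 0 := by rw [← norm_ne_zero_iff, norm_expI]; exact one_ne_zero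
  induction n using Int.induction_on with
  | zero => simp [expI_zero]
  | succ n ih => rw [zpow_add_one₀ h₀, ih, ← expI_add]; push_cast; ring_nf
  | pred n ih =>
    have hinv : (expI a)⁻¹ = expI (-a) :=
      inv_eq_of_mul_eq_one_right (by rw [← expI_add, add_neg_cancel, expI_zero])
    rw [zpow_sub_one₀ h₀, ih, hinv, ← expI_add]; push_cast; ring_nf

lemma qj_mul_expI (a : ℝ) : qj * expI a = expI (-a) * qj := by
  ext <;> simp [Quaternion.re_mul, Quaternion.imI_mul, Quaternion.imJ_mul, Quaternion.imK_mul]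

lemma qj_mul_qj : qj * qj = -1 := by
  ext <;> simp [Quaternion.re_mul, Quaternion.imI_mul, Quaternion.imJ_mul, Quaternion.imK_mul]

lemma star_expI_mul_qj (a : ℝ) : star (expI a * qj) = -(expI a * qj) := by
  ext <;> simp [Quaternion.re_mul, Quaternion.imI_mul, Quaternion.imJ_mul, Quaternion.imK_mul]

lemma expI_mul_qj_mul_expI (a b : ℝ) : expI a * qj * expI b = expI (a - b) * qj := by
  rw [mul_assoc, qj_mul_expI, ← mul_assoc, ← expI_add, sub_eq_add_neg]

lemma expI_mul_qj_mul_expI_mul_qj (a b : ℝ) : expI a * qj * (expI b * qj) = -expI (a - b) := by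
  rw [← mul_assoc, expI_mul_qj_mul_expI, mul_assoc, qj_mul_qj, mul_neg_one]

lemma es_eq_expI (s : ℕ) : es s = expI (π / s) := rfl

lemma es_zpow (m : ℕ) (n : ℤ) : es m ^ n = expI (n * (π / m)) := by
  rw [es_eq_expI, expI_zpow]

lemma qi_zpow (n : ℤ) : qi ^ n = expI (n * (π / 2)) := by
  rw [show qi = expI (π / 2) by ext <;> simp [qi], expI_zpow]

lemma es_four : es 4 = expI (π / 4) := by
  rw [es_eq_expI]
  norm_num

lemma grot_eq_qrot_expI (m : ℕ) (r : ℤ) :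
    grot m r = qrot (expI (r * (π / m)) * qj) (expI (r * (π / 2) - π / 4) * qj)
      (norm_expI_mul_qj _) (norm_expI_mul_qj _) :=
  qrot_congr (by rw [es_zpow]) (by rw [qi_zpow, es_four, expI_mul_qj_mul_expI]) _ _ _ _

lemma qrot_expI_mul_qj_mul_self (a b : ℝ) :
    qrot (expI a * qj) (expI b * qj) (norm_expI_mul_qj a) (norm_expI_mul_qj b) *
      qrot (expI a * qj) (expI b * qj) (norm_expI_mul_qj a) (norm_expI_mul_qj b) = 1 := by
  rw [qrot_mul, ← qrot_one_one, ← qrot_neg_neg 1 1 norm_one norm_one]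
  exact qrot_congr (by rw [expI_mul_qj_mul_expI_mul_qj, sub_self, expI_zero])
    (by rw [expI_mul_qj_mul_expI_mul_qj, sub_self, expI_zero]) _ _ _ _

lemma qrot_expI_mul_qj_ne_one (a b : ℝ) :
    qrot (expI a * qj) (expI b * qj) (norm_expI_mul_qj a) (norm_expI_mul_qj b) ≠ 1 := by
  intro h
  have fixes (θ : ℝ) : expI (a - θ - b) = expI θ := by
    have hθ := LinearEquiv.congr_fun h (expI θ)
    rwa [qrot_apply, star_expI_mul_qj, neg_mul, expI_mul_qj_mul_expI, neg_mul,
      expI_mul_qj_mul_expI_mul_qj, neg_neg, LinearEquiv.coe_one, id] at hθ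
  have h₀ : expI (a - b) = 1 := by simpa [expI_zero] using fixes 0
  have h₁ : expI (-(π / 2)) = expI (π / 2) := by
    rw [← fixes (π / 2), show a - π / 2 - b = a - b + -(π / 2) by ring, expI_add, h₀, one_mul]
  have := congrArg QuaternionAlgebra.imI h₁
  norm_num at this

lemma qrot_expI_conj (a b c d : ℝ) :
    qrot (expI a) (expI b) (norm_expI a) (norm_expI b) *
        qrot (expI c * qj) (expI d * qj) (norm_expI_mul_qj c) (norm_expI_mul_qj d) *
        (qrot (expI a) (expI b) (norm_expI a) (norm_expI b))⁻¹ =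
      qrot (expI (c - 2 * a) * qj) (expI (d - 2 * b) * qj) (norm_expI_mul_qj _)
        (norm_expI_mul_qj _) := by
  refine qrot_mul_qrot_mul_inv _ _ _ _ _ _ ?_ ?_ <;>
  · rw [expI_mul_qj_mul_expI, ← mul_assoc, ← expI_add]
    ring_nf

lemma qrot_expI_expI_mul_qj_conj (a b c d : ℝ) :
    qrot (expI a) (expI b * qj) (norm_expI a) (norm_expI_mul_qj b) *
        qrot (expI c * qj) (expI d * qj) (norm_expI_mul_qj c) (norm_expI_mul_qj d) *
        (qrot (expI a) (expI b * qj) (norm_expI a) (norm_expI_mul_qj b))⁻¹ =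
      qrot (expI (c - 2 * a) * qj) (expI (2 * b - d) * qj) (norm_expI_mul_qj _)
        (norm_expI_mul_qj _) := by
  refine qrot_mul_qrot_mul_inv _ _ _ _ _ _ ?_ ?_
  · rw [expI_mul_qj_mul_expI, ← mul_assoc, ← expI_add]
    ring_nf
  · rw [expI_mul_qj_mul_expI_mul_qj, expI_mul_qj_mul_expI_mul_qj]
    ring_nf

lemma qrot_expI_add_pi_mul_qj (a b : ℝ) :
    qrot (expI (a + π) * qj) (expI (b + π) * qj) (norm_expI_mul_qj _) (norm_expI_mul_qj _) =
      qrot (expI a * qj) (expI b * qj) (norm_expI_mul_qj a) (norm_expI_mul_qj b) := by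
  rw [← qrot_neg_neg]
  exact qrot_congr (by rw [expI_add_pi, neg_mul, neg_neg]) (by rw [expI_add_pi, neg_mul, neg_neg])
    _ _ _ _

lemma norm_es_zpow (m : ℕ) (n : ℤ) : ‖es m ^ n‖ = 1 := by
  rw [norm_zpow, norm_es, one_zpow]

lemma norm_qi_zpow (n : ℤ) : ‖qi ^ n‖ = 1 := by
  rw [norm_zpow, norm_qi, one_zpow]

lemma norm_qi_zpow_mul_qj (n : ℤ) : ‖qi ^ n * qj‖ = 1 := by
  rw [norm_mul, norm_qi_zpow, norm_qj, one_mul]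

lemma qrot_zpow_zpow_mem_G1 (m : ℕ) (p q : ℤ) :
    qrot (es m ^ p) (qi ^ q) (norm_es_zpow m p) (norm_qi_zpow q) ∈ G1 m := by
  have h : qrot (es m ^ p) (qi ^ q) (norm_es_zpow m p) (norm_qi_zpow q) =
      qrot (es m) 1 (norm_es m) norm_one ^ p * qrot 1 qi norm_one norm_qi ^ q := by
    rw [qrot_zpow, qrot_zpow, qrot_mul]
    exact qrot_congr (by simp) (by simp) _ _ _ _
  rw [h]
  exact mul_mem (zpow_mem (Subgroup.subset_closure (by simp)) p)
    (zpow_mem (Subgroup.subset_closure (by simp)) q)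

lemma qrot_zpow_zpow_mul_qj_mem_G1 (m : ℕ) (p q : ℤ) :
    qrot (es m ^ p) (qi ^ q * qj) (norm_es_zpow m p) (norm_qi_zpow_mul_qj q) ∈ G1 m := by
  have h : qrot (es m ^ p) (qi ^ q * qj) (norm_es_zpow m p) (norm_qi_zpow_mul_qj q) =
      qrot 1 qj norm_one norm_qj *
        qrot (es m ^ p) (qi ^ q) (norm_es_zpow m p) (norm_qi_zpow q) := by
    rw [qrot_mul]
    exact qrot_congr (mul_one _).symm rfl _ _ _ _
  rw [h]
  exact mul_mem (Subgroup.subset_closure (by simp)) (qrot_zpow_zpow_mem_G1 m p q)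

lemma grot_mem_G1 (m : ℕ) (r : ℤ) : grot m r ∈ G1 m := by
  have h : grot m r = qrot qj (es 4) norm_qj (norm_es 4) *
      qrot (es m ^ r) (qi ^ r * qj) (norm_es_zpow m r) (norm_qi_zpow_mul_qj r) :=
    (qrot_mul _ _ _ _ _ _ _ _).symm
  rw [h]
  exact mul_mem (Subgroup.subset_closure (by simp)) (qrot_zpow_zpow_mul_qj_mem_G1 m r r)

lemma exists_conj_grot_add_two_mul (m : ℕ) (s k : ℤ) :
    ∃ h ∈ G1 m, h * grot m (s + 2 * k) * h⁻¹ = grot m s := by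
  refine ⟨_, qrot_zpow_zpow_mem_G1 m k k, ?_⟩
  rw [qrot_congr (es_zpow m k) (qi_zpow k) _ _ (norm_expI _) (norm_expI _), grot_eq_qrot_expI,
    grot_eq_qrot_expI, qrot_expI_conj]
  exact qrot_congr (by congr 2; push_cast; ring) (by congr 2; push_cast; ring) _ _ _ _

lemma exists_conj_grot_add_two_mul_add_one {m : ℕ} (hm : Odd m) (s k : ℤ) :
    ∃ h ∈ G1 m, h * grot m (s + 2 * k + 1) * h⁻¹ = grot m s := by
  obtain ⟨t, rfl⟩ := hm
  refine ⟨_, qrot_zpow_zpow_mul_qj_mem_G1 _ (k - t) (s + k + 1), ?_⟩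
  rw [qrot_congr (es_zpow _ _) (by rw [qi_zpow]) _ _ (norm_expI _) (norm_expI_mul_qj _),
    grot_eq_qrot_expI, grot_eq_qrot_expI, qrot_expI_expI_mul_qj_conj]
  have hm₀ : ((2 * t + 1 : ℕ) : ℝ) ≠ 0 := by positivity
  refine (qrot_congr ?_ ?_ _ _ (norm_expI_mul_qj _) (norm_expI_mul_qj _)).trans
    (qrot_expI_add_pi_mul_qj _ _)
  · congr 2; field_simp; push_cast; ring
  · congr 2; push_cast; ring

theorem grot_involutions_conjugate_general (m : ℕ) (hodd : Odd m) :
    (∀ r : ℤ, grot m r ∈ G1 m ∧ grot m r * grot m r = 1 ∧ grot m r ≠ 1) ∧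
    (∀ r s : ℤ, ∃ h ∈ G1 m, h * grot m r * h⁻¹ = grot m s) := by
  refine ⟨fun r => ⟨grot_mem_G1 m r, ?_, ?_⟩, fun r s => ?_⟩
  · rw [grot_eq_qrot_expI]
    exact qrot_expI_mul_qj_mul_self _ _
  · rw [grot_eq_qrot_expI]
    exact qrot_expI_mul_qj_ne_one _ _
  · obtain ⟨k, hk | hk⟩ := Int.even_or_odd' (r - s)
    · rw [show r = s + 2 * k by omega]
      exact exists_conj_grot_add_two_mul m s k
    · rw [show r = s + 2 * k + 1 by omega]
      exact exists_conj_grot_add_two_mul_add_one hodd s k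

/-- Each `g_r = [e_mʳ j, iʳ j e₄]` lies in `G₁(m)` and is an involution (distinct
from the identity); moreover all the `g_r` are conjugate in `G₁(m)`. -/
theorem grot_involutions_conjugate (m : ℕ) (hm : 3 ≤ m) (hodd : Odd m) :
    (∀ r : ℤ, grot m r ∈ G1 m ∧ grot m r * grot m r = 1 ∧ grot m r ≠ 1) ∧
    (∀ r s : ℤ, ∃ h ∈ G1 m, h * grot m r * h⁻¹ = grot m s) :=
  grot_involutions_conjugate_general m hodd
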